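/- arXiv:1607.05091 — 2 statements merged into one kernel-verified Lean document; each statement's English description precedes it below -/
import Mathlib

section
/- Let δ and λ be in (0,1). Consider the criterion crit(D) = -∑_{j=1}^{D} ξ(φ_j)² + λDε² for D ∈ [1,N], where, since f = 0, ξ(φ_j) = ε η_j with η_1,…,η_N i.i.d. standard Gaussian variables, and let D̂ be a minimizer of crit over D ∈ [1,N]. If N is large enough (depending only on λ and δ), then P( D̂ ≥ (1−λ)N/2 ) ≥ 1−δ and E[ ‖f̂_{D̂}‖² ] ≥ (1−δ)(1−λ)Nε²/4, where ‖f̂_D‖² = ε² ∑_{j=1}^{D} η_j². -/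
/-!
Comparing `D̂` with `D = N` gives `∑_{D̂ ≤ j < N} η_j² ≤ λ (N - D̂)`. If `D̂ < (1 - λ) N / 2`,
the at least `(1 + λ) N / 2 - 1` squares with index in `[⌈(1 - λ) N / 2⌉, N)` would sum to at most
`λ N`, i.e. to a fixed fraction `γ < 1` of their expected total. Truncating the squares at a level
`K` for which the truncated mean still exceeds `γ` and applying Chebyshev's inequality bounds the
probability of this by `δ` once `N` is large.

The same comparison gives `‖f̂_D̂‖² ≥ ε² (χ²_N - λ N)` pointwise, whose expectation is
`(1 - λ) N ε²`. The expectation of `‖f̂_D̂‖²` makes sense because ties between criterion values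
have probability zero, so `D̂` agrees almost surely with a measurable minimizer.
-/

open MeasureTheory ProbabilityTheory Real Finset

noncomputable section

/-- The penalized criterion `crit(D) = -ε² ∑_{j<D} η_j² + λ D ε²`
(here `ξ(φ_j) = ε η_j` since `f = 0`). -/
def critGauss (lam ε : ℝ) (η : ℕ → ℝ) (D : ℕ) : ℝ :=
  -(ε ^ 2 * ∑ j ∈ Finset.range D, (η j) ^ 2) + lam * D * ε ^ 2

open Filter Topology
open scoped NNReal

lemma integral_sq_gaussianReal (μ : ℝ) (v : ℝ≥0) :
    ∫ x, x ^ 2 ∂gaussianReal μ v = μ ^ 2 + v := by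
  have h := variance_id_gaussianReal (μ := μ) (v := v)
  rw [variance_eq_sub (memLp_id_gaussianReal 2)] at h
  simp only [Pi.pow_apply, id_eq] at h
  rw [integral_id_gaussianReal] at h
  linarith

lemma integrable_and_integral_sum_range_sq {Ω : Type*} [MeasurableSpace Ω] {P : Measure Ω}
    {η : ℕ → Ω → ℝ} (hη : ∀ j, Measurable (η j))
    (hlaw : ∀ j, P.map (η j) = gaussianReal 0 1) (N : ℕ) :
    Integrable (fun ω => ∑ j ∈ range N, η j ω ^ 2) P ∧
      ∫ ω, ∑ j ∈ range N, η j ω ^ 2 ∂P = N := by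
  have hsq : ∀ j, Integrable (fun ω => η j ω ^ 2) P := fun j =>
    (integrable_map_measure (g := fun x : ℝ => x ^ 2) (by fun_prop) (hη j).aemeasurable).1
      (hlaw j ▸ (memLp_id_gaussianReal 2).integrable_sq)
  have hmean : ∀ j, ∫ ω, η j ω ^ 2 ∂P = 1 := fun j => by
    rw [← integral_map (f := fun x : ℝ => x ^ 2) (hη j).aemeasurable (by fun_prop), hlaw j,
      integral_sq_gaussianReal]
    norm_num
  refine ⟨integrable_finsetSum _ fun j _ => hsq j, ?_⟩
  rw [integral_finsetSum _ fun j _ => hsq j]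
  simp [hmean]

lemma exists_lt_integral_min_natCast {α : Type*} [MeasurableSpace α] {ν : Measure α}
    [IsFiniteMeasure ν] {g : α → ℝ} (hg : Integrable g ν) {γ : ℝ} (hγ : γ < ∫ x, g x ∂ν) :
    ∃ K : ℕ, γ < ∫ x, min (g x) K ∂ν := by
  have htend : Tendsto (fun K : ℕ => ∫ x, min (g x) K ∂ν) atTop (𝓝 (∫ x, g x ∂ν)) :=
    integral_tendsto_of_tendsto_of_monotone (fun K => hg.inf (integrable_const _)) hg
      (ae_of_all _ fun x _ _ h => min_le_min_left _ (by exact_mod_cast h))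
      (ae_of_all _ fun x => tendsto_atTop_of_eventually_const (i₀ := ⌈g x⌉₊)
        fun K hK => min_eq_left ((Nat.le_ceil _).trans (by exact_mod_cast hK)))
  exact (htend.eventually (eventually_gt_nhds hγ)).exists

section Atoms

variable {Ω : Type*} [MeasurableSpace Ω] {P : Measure Ω}

lemma measure_preimage_singleton_eq_zero_of_map_eq_gaussianReal {X : Ω → ℝ} (hX : Measurable X)
    {μ : ℝ} {v : ℝ≥0} (hv : v ≠ 0) (hlaw : P.map X = gaussianReal μ v) (x : ℝ) :
    P (X ⁻¹' {x}) = 0 := by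
  have := nullSingletonClass_gaussianReal (μ := μ) hv
  rw [← Measure.map_apply hX (measurableSet_singleton x), hlaw, measure_singleton]

lemma measure_sq_preimage_eq_zero {X : Ω → ℝ} (hX : ∀ x, P (X ⁻¹' {x}) = 0) (t : ℝ) :
    P ((fun ω => X ω ^ 2) ⁻¹' {t}) = 0 := by
  refine measure_mono_null (t := X ⁻¹' {√t} ∪ X ⁻¹' {-√t}) (fun ω hω => ?_)
    (measure_union_null (hX _) (hX _))
  have hsq : X ω ^ 2 = √t ^ 2 := by
    rw [sq_sqrt (hω.symm ▸ sq_nonneg (X ω) : (0 : ℝ) ≤ t)]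
    exact hω
  exact sq_eq_sq_iff_eq_or_eq_neg.1 hsq

lemma ProbabilityTheory.IndepFun.measure_add_eq_eq_zero [IsFiniteMeasure P] {X Y : Ω → ℝ}
    (hXY : IndepFun X Y P) (hX : Measurable X) (hY : Measurable Y)
    (hYatom : ∀ y, P (Y ⁻¹' {y}) = 0) (c : ℝ) :
    P {ω | X ω + Y ω = c} = 0 := by
  have hset : MeasurableSet {p : ℝ × ℝ | p.1 + p.2 = c} :=
    (measurable_fst.add measurable_snd) (measurableSet_singleton c)
  have hsection : ∀ x, (P.map Y) (Prod.mk x ⁻¹' {p : ℝ × ℝ | p.1 + p.2 = c}) = 0 := by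
    intro x
    have : Prod.mk x ⁻¹' {p : ℝ × ℝ | p.1 + p.2 = c} = {c - x} := by
      ext y
      simp [eq_sub_iff_add_eq']
    rw [this, Measure.map_apply hY (measurableSet_singleton _), hYatom]
  change P ((fun ω => (X ω, Y ω)) ⁻¹' {p : ℝ × ℝ | p.1 + p.2 = c}) = 0
  rw [← Measure.map_apply (hX.prodMk hY) hset,
    (indepFun_iff_map_prod_eq_prod_map_map hX.aemeasurable hY.aemeasurable).1 hXY,
    Measure.prod_apply hset]
  exact (lintegral_congr hsection).trans lintegral_zero

lemma ProbabilityTheory.iIndepFun.measure_sum_eq_eq_zero [IsProbabilityMeasure P] {ι : Type*}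
    {X : ι → Ω → ℝ} (hind : iIndepFun X P) (hX : ∀ i, Measurable (X i))
    (hatom : ∀ i x, P (X i ⁻¹' {x}) = 0) {s : Finset ι} (hs : s.Nonempty) (c : ℝ) :
    P {ω | ∑ i ∈ s, X i ω = c} = 0 := by
  classical
  obtain ⟨k, hk⟩ := hs
  have hsplit : ∀ ω, ∑ i ∈ s, X i ω = (∑ i ∈ s.erase k, X i) ω + X k ω := fun ω => by
    rw [Finset.sum_apply, sum_erase_add _ _ hk]
  simp_rw [hsplit]
  exact (hind.indepFun_finsetSum_of_notMem hX (notMem_erase k s)).measure_add_eq_eq_zero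
    (by fun_prop) (hX k) (hatom k) c

lemma aemeasurable_argmin_of_measure_ties_eq_zero {f : ℕ → Ω → ℝ} (hf : ∀ n, Measurable (f n))
    {s : Finset ℕ} (hties : (s : Set ℕ).Pairwise fun m n => P {ω | f m ω = f n ω} = 0)
    {D : Ω → ℕ} (hD : ∀ ω, D ω ∈ s ∧ ∀ n ∈ s, f (D ω) ω ≤ f n ω) : AEMeasurable D P := by
  classical
  have hex : ∀ ω, ∃ n, n ∈ s ∧ ∀ m ∈ s, f n ω ≤ f m ω := fun ω => ⟨D ω, hD ω⟩
  refine ⟨fun ω => Nat.find (hex ω), measurable_find hex fun n => ?_, ?_⟩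
  · simp only [Set.ofPred_and, Set.ofPred_forall]
    exact (MeasurableSet.const _).inter (.iInter fun m => .iInter fun _ =>
      measurableSet_le (hf n) (hf m))
  · have hnull : P (⋃ m ∈ s, ⋃ n ∈ s, {ω | m ≠ n ∧ f m ω = f n ω}) = 0 := by
      refine (measure_biUnion_null_iff s.countable_toSet).2 fun m hm =>
        (measure_biUnion_null_iff s.countable_toSet).2 fun n hn => ?_
      by_cases hmn : m = n
      · simp [hmn]
      · exact measure_mono_null (fun ω hω => hω.2) (hties hm hn hmn)
    refine measure_mono_null (fun ω hω => ?_) hnull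
    obtain ⟨hDs, hDmin⟩ := hD ω
    obtain ⟨hFs, hFmin⟩ := Nat.find_spec (hex ω)
    simp only [Set.mem_iUnion]
    exact ⟨D ω, hDs, _, hFs, hω, le_antisymm (hDmin _ hFs) (hFmin _ hDs)⟩

end Atoms

section Concentration

variable {Ω : Type*} [MeasurableSpace Ω] {P : Measure Ω} [IsProbabilityMeasure P] {ι : Type*}

lemma measure_sum_le_sum_integral_sub_le {ζ : ι → Ω → ℝ} {a b c : ℝ}
    (hζ : ∀ i, Measurable (ζ i)) (hind : Pairwise fun i j => IndepFun (ζ i) (ζ j) P)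
    (hbdd : ∀ i ω, ζ i ω ∈ Set.Icc a b) (s : Finset ι) (hc : 0 < c) :
    P {ω | ∑ i ∈ s, ζ i ω ≤ ∑ i ∈ s, P[ζ i] - c} ≤
      ENNReal.ofReal (#s * ((b - a) / 2) ^ 2 / c ^ 2) := by
  have hL2 : ∀ i, MemLp (ζ i) 2 P := fun i =>
    memLp_of_bounded (ae_of_all _ (hbdd i)) (hζ i).aestronglyMeasurable 2
  have hsumL2 : MemLp (∑ i ∈ s, ζ i) 2 P := memLp_finsetSum' _ fun i _ => hL2 i
  have hmean : ∫ ω, ∑ i ∈ s, ζ i ω ∂P = ∑ i ∈ s, P[ζ i] :=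
    integral_finsetSum _ fun i _ => (hL2 i).integrable one_le_two
  have hvar : variance (∑ i ∈ s, ζ i) P ≤ #s * ((b - a) / 2) ^ 2 := by
    rw [IndepFun.variance_sum (fun i _ => hL2 i) fun i _ j _ hij => hind hij]
    calc _ ≤ ∑ _i ∈ s, ((b - a) / 2) ^ 2 := sum_le_sum fun i _ =>
          variance_le_sq_of_bounded (ae_of_all _ (hbdd i)) (hζ i).aemeasurable
      _ = _ := by simp
  calc P {ω | ∑ i ∈ s, ζ i ω ≤ ∑ i ∈ s, P[ζ i] - c}
      ≤ P {ω | c ≤ |(∑ i ∈ s, ζ i) ω - P[∑ i ∈ s, ζ i]|} := by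
        refine measure_mono fun ω hω => ?_
        simp only [Set.mem_ofPred_eq, Finset.sum_apply, hmean] at hω ⊢
        exact le_abs.2 (Or.inr (by linarith))
    _ ≤ ENNReal.ofReal (variance (∑ i ∈ s, ζ i) P / c ^ 2) :=
        meas_ge_le_variance_div_sq hsumL2 hc
    _ ≤ _ := ENNReal.ofReal_le_ofReal (div_le_div_of_nonneg_right hvar (sq_nonneg c))

lemma measure_sum_sq_le_mul_card_le {ν : Measure ℝ} {η : ι → Ω → ℝ} (hη : ∀ i, Measurable (η i))
    (hlaw : ∀ i, P.map (η i) = ν) (hind : iIndepFun η P) {K γ : ℝ} (hK : 0 ≤ K)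
    (hγ : γ < ∫ x, min (x ^ 2) K ∂ν) {s : Finset ι} (hs : s.Nonempty) :
    P {ω | ∑ i ∈ s, η i ω ^ 2 ≤ γ * #s} ≤
      ENNReal.ofReal (K ^ 2 / (4 * (∫ x, min (x ^ 2) K ∂ν - γ) ^ 2 * #s)) := by
  set t := ∫ x, min (x ^ 2) K ∂ν - γ
  have ht : 0 < t := sub_pos.2 hγ
  have hcard : (0 : ℝ) < #s := by exact_mod_cast hs.card_pos
  set ζ : ι → Ω → ℝ := fun i ω => min (η i ω ^ 2) K
  have hζ : ∀ i, Measurable (ζ i) := fun i => by fun_prop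
  have hζind : Pairwise fun i j => IndepFun (ζ i) (ζ j) P := fun i j hij =>
    (hind.comp (fun _ x => min (x ^ 2) K) fun _ => by fun_prop).indepFun hij
  have hζmean : ∀ i, P[ζ i] = ∫ x, min (x ^ 2) K ∂ν := fun i => by
    rw [← hlaw i, integral_map (hη i).aemeasurable (by fun_prop)]
  calc P {ω | ∑ i ∈ s, η i ω ^ 2 ≤ γ * #s}
      ≤ P {ω | ∑ i ∈ s, ζ i ω ≤ ∑ i ∈ s, P[ζ i] - t * #s} := by
        refine measure_mono fun ω hω => ?_
        simp only [Set.mem_ofPred_eq, hζmean, sum_const, nsmul_eq_mul] at hω ⊢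
        calc ∑ i ∈ s, ζ i ω ≤ ∑ i ∈ s, η i ω ^ 2 := sum_le_sum fun i _ => min_le_left _ _
          _ ≤ γ * #s := hω
          _ = _ := by ring
    _ ≤ ENNReal.ofReal (#s * ((K - 0) / 2) ^ 2 / (t * #s) ^ 2) :=
        measure_sum_le_sum_integral_sub_le hζ hζind
          (fun i ω => ⟨le_min (sq_nonneg _) hK, min_le_right _ _⟩) s (by positivity)
    _ = _ := by congr 1; field_simp; ring

lemma ofReal_one_sub_le_of_measure_compl_le {A : Set Ω} {δ : ℝ} (hδ : 0 ≤ δ)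
    (h : P Aᶜ ≤ ENNReal.ofReal δ) : ENNReal.ofReal (1 - δ) ≤ P A := by
  rw [ENNReal.ofReal_sub _ hδ, ENNReal.ofReal_one, tsub_le_iff_right]
  calc 1 = P (A ∪ Aᶜ) := by rw [Set.union_compl_self, measure_univ]
    _ ≤ P A + P Aᶜ := measure_union_le _ _
    _ ≤ P A + ENNReal.ofReal δ := by gcongr

end Concentration

lemma card_Ico_ceil_mul_ge {a : ℝ} (ha : 0 ≤ a) (N : ℕ) :
    (1 - a) * N - 1 ≤ #(Ico ⌈a * N⌉₊ N) := by
  rw [Nat.card_Ico]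
  have hceil : (⌈a * N⌉₊ : ℝ) < a * N + 1 := Nat.ceil_lt_add_one (by positivity)
  rcases le_total ⌈a * N⌉₊ N with h | h
  · rw [Nat.cast_sub h]
    linarith
  · rw [Nat.sub_eq_zero_of_le h, Nat.cast_zero]
    have : (N : ℝ) ≤ ⌈a * N⌉₊ := by exact_mod_cast h
    linarith

lemma eventually_le_mul_card_Ico_ceil {lam γ : ℝ} (hlam0 : 0 ≤ lam) (hlam1 : lam ≤ 1)
    (hγ : lam < γ * (1 + lam) / 2) (B : ℝ) :
    ∀ᶠ N : ℕ in atTop, lam * N ≤ γ * #(Ico ⌈(1 - lam) / 2 * N⌉₊ N) ∧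
      B ≤ #(Ico ⌈(1 - lam) / 2 * N⌉₊ N) := by
  have hγ0 : 0 ≤ γ := by nlinarith
  have hc : 0 < γ * (1 + lam) / 2 - lam := sub_pos.2 hγ
  filter_upwards [eventually_ge_atTop ⌈max (γ / (γ * (1 + lam) / 2 - lam)) (2 * (B + 1))⌉₊]
    with N hN
  obtain ⟨hNγ, hNB⟩ := max_le_iff.1 (Nat.ceil_le.1 hN)
  rw [div_le_iff₀' hc] at hNγ
  have hcard := card_Ico_ceil_mul_ge (a := (1 - lam) / 2) (by linarith) N
  constructor <;> nlinarith [mul_le_mul_of_nonneg_left hcard hγ0]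

section Criterion

variable {m n : ℕ}

lemma critGauss_sub_critGauss (lam ε : ℝ) (x : ℕ → ℝ) (hmn : m ≤ n) :
    critGauss lam ε x n - critGauss lam ε x m =
      ε ^ 2 * (lam * (n - m) - ∑ j ∈ Ico m n, x j ^ 2) := by
  rw [sum_Ico_eq_sub _ hmn]
  unfold critGauss
  ring

variable {lam ε : ℝ} {x : ℕ → ℝ}

lemma sum_Ico_sq_le_of_critGauss_le (hε : ε ≠ 0) (hmn : m ≤ n)
    (h : critGauss lam ε x m ≤ critGauss lam ε x n) :
    ∑ j ∈ Ico m n, x j ^ 2 ≤ lam * (n - m) := by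
  have := critGauss_sub_critGauss lam ε x hmn
  have : 0 ≤ ε ^ 2 * (lam * (n - m) - ∑ j ∈ Ico m n, x j ^ 2) := by linarith
  linarith [nonneg_of_mul_nonneg_right this (by positivity)]

lemma sum_Ico_sq_eq_of_critGauss_eq (hε : ε ≠ 0) (hmn : m ≤ n)
    (h : critGauss lam ε x m = critGauss lam ε x n) :
    ∑ j ∈ Ico m n, x j ^ 2 = lam * (n - m) := by
  have := critGauss_sub_critGauss lam ε x hmn
  rw [h, sub_self, eq_comm, mul_eq_zero, sub_eq_zero] at this
  exact (this.resolve_left (by positivity)).symm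

lemma sum_Ico_ceil_sq_le_of_critGauss_le {r : ℝ} (hε : ε ≠ 0) (hlam : 0 ≤ lam) (hmn : m ≤ n)
    (h : critGauss lam ε x m ≤ critGauss lam ε x n) (hmr : (m : ℝ) < r) :
    ∑ j ∈ Ico ⌈r⌉₊ n, x j ^ 2 ≤ lam * n := by
  have hm : m ≤ ⌈r⌉₊ := by exact_mod_cast hmr.le.trans (Nat.le_ceil r)
  calc ∑ j ∈ Ico ⌈r⌉₊ n, x j ^ 2 ≤ ∑ j ∈ Ico m n, x j ^ 2 :=
        sum_le_sum_of_subset_of_nonneg (Ico_subset_Ico_left hm) fun j _ _ => sq_nonneg _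
    _ ≤ lam * (n - m) := sum_Ico_sq_le_of_critGauss_le hε hmn h
    _ ≤ lam * n := by nlinarith [(Nat.cast_nonneg m : (0 : ℝ) ≤ m)]

end Criterion

section Argmin

variable {Ω : Type*} [MeasurableSpace Ω] {P : Measure Ω} [IsProbabilityMeasure P]
  {η : ℕ → Ω → ℝ} {lam ε : ℝ} {N : ℕ} {Dhat : Ω → ℕ}

lemma aemeasurable_argmin_critGauss (hη : ∀ j, Measurable (η j))
    (hlaw : ∀ j, P.map (η j) = gaussianReal 0 1) (hind : iIndepFun η P) (hε : ε ≠ 0)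
    (hDhat : ∀ ω, Dhat ω ∈ Icc 1 N ∧ ∀ D ∈ Icc 1 N,
      critGauss lam ε (fun j => η j ω) (Dhat ω) ≤ critGauss lam ε (fun j => η j ω) D) :
    AEMeasurable Dhat P := by
  have hsq : iIndepFun (fun j ω => η j ω ^ 2) P :=
    hind.comp (fun _ x => x ^ 2) fun _ => by fun_prop
  have hatom : ∀ j t, P ((fun ω => η j ω ^ 2) ⁻¹' {t}) = 0 := fun j =>
    measure_sq_preimage_eq_zero
      (measure_preimage_singleton_eq_zero_of_map_eq_gaussianReal (hη j) one_ne_zero (hlaw j))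
  have hties : ∀ m n, m < n →
      P {ω | critGauss lam ε (fun j => η j ω) m = critGauss lam ε (fun j => η j ω) n} = 0 :=
    fun m n hmn => measure_mono_null (fun ω hω => sum_Ico_sq_eq_of_critGauss_eq hε hmn.le hω)
      (hsq.measure_sum_eq_eq_zero (fun j => by fun_prop) hatom (nonempty_Ico.2 hmn) _)
  refine aemeasurable_argmin_of_measure_ties_eq_zero
    (f := fun D ω => critGauss lam ε (fun j => η j ω) D) (fun D => by unfold critGauss; fun_prop)
    (fun m _ n _ hmn => ?_) hDhat
  rcases hmn.lt_or_gt with h | h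
  · exact hties m n h
  · simpa only [eq_comm] using hties n m h

lemma one_sub_mul_le_integral_argmin_critGauss (hη : ∀ j, Measurable (η j))
    (hlaw : ∀ j, P.map (η j) = gaussianReal 0 1) (hind : iIndepFun η P) (hlam : 0 ≤ lam)
    (hε : ε ≠ 0) (hN : 1 ≤ N)
    (hDhat : ∀ ω, Dhat ω ∈ Icc 1 N ∧ ∀ D ∈ Icc 1 N,
      critGauss lam ε (fun j => η j ω) (Dhat ω) ≤ critGauss lam ε (fun j => η j ω) D) :
    (1 - lam) * N * ε ^ 2 ≤ ∫ ω, ε ^ 2 * ∑ j ∈ range (Dhat ω), η j ω ^ 2 ∂P := by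
  set S : ℕ → Ω → ℝ := fun D ω => ∑ j ∈ range D, η j ω ^ 2
  have hS := integrable_and_integral_sum_range_sq hη hlaw
  have hSD : ∀ ω, S (Dhat ω) ω ≤ S N ω := fun ω =>
    sum_le_sum_of_subset_of_nonneg (range_subset_range.2 (mem_Icc.1 (hDhat ω).1).2)
      fun j _ _ => sq_nonneg _
  have hlow : ∀ ω, ε ^ 2 * S N ω - lam * N * ε ^ 2 ≤ ε ^ 2 * S (Dhat ω) ω := fun ω => by
    have hDN := (mem_Icc.1 (hDhat ω).1).2
    have hIco : ∑ j ∈ Ico (Dhat ω) N, η j ω ^ 2 ≤ lam * N := by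
      have := sum_Ico_sq_le_of_critGauss_le hε hDN ((hDhat ω).2 N (mem_Icc.2 ⟨hN, le_rfl⟩))
      nlinarith [(Nat.cast_nonneg (Dhat ω) : (0 : ℝ) ≤ Dhat ω)]
    simp only [S]
    rw [← sum_range_add_sum_Ico _ hDN]
    nlinarith [mul_le_mul_of_nonneg_left hIco (sq_nonneg ε)]
  have hmeas : AEStronglyMeasurable (fun ω => ε ^ 2 * S (Dhat ω) ω) P :=
    ((measurable_from_prod_countable_left (f := fun p : Ω × ℕ => ε ^ 2 * S p.2 p.1)
      fun D => (Finset.measurable_sum (range D) fun j _ => (hη j).pow_const 2).const_mul (ε ^ 2)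
      ).comp_aemeasurable (aemeasurable_id.prodMk
        (aemeasurable_argmin_critGauss hη hlaw hind hε hDhat))).aestronglyMeasurable
  have hint : Integrable (fun ω => ε ^ 2 * S (Dhat ω) ω) P :=
    ((hS N).1.const_mul _).mono' hmeas (ae_of_all _ fun ω => by
      rw [Real.norm_of_nonneg (by positivity)]
      exact mul_le_mul_of_nonneg_left (hSD ω) (sq_nonneg ε))
  calc (1 - lam) * N * ε ^ 2 = ∫ ω, ε ^ 2 * S N ω - lam * N * ε ^ 2 ∂P := by
        rw [integral_sub ((hS N).1.const_mul _) (integrable_const _), integral_const_mul,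
          (hS N).2]
        simp
        ring
    _ ≤ _ := integral_mono (((hS N).1.const_mul _).sub (integrable_const _)) hint hlow

end Argmin

theorem minimal_penalty_explosion
    (δ lam : ℝ) (hδ : δ ∈ Set.Ioo (0 : ℝ) 1) (hlam : lam ∈ Set.Ioo (0 : ℝ) 1) :
    ∃ N₀ : ℕ, ∀ N : ℕ, N₀ ≤ N →
      ∀ (Ω : Type) (_ : MeasurableSpace Ω) (P : Measure Ω),
        IsProbabilityMeasure P →
        ∀ (η : ℕ → Ω → ℝ),
          (∀ j, Measurable (η j)) →
          (∀ j, Measure.map (η j) P = gaussianReal 0 1) →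
          iIndepFun η P →
          ∀ (ε : ℝ), 0 < ε →
          ∀ (Dhat : Ω → ℕ),
            (∀ ω, Dhat ω ∈ Finset.Icc 1 N ∧
              ∀ D ∈ Finset.Icc 1 N,
                critGauss lam ε (fun j => η j ω) (Dhat ω) ≤
                  critGauss lam ε (fun j => η j ω) D) →
            P {ω | ((1 - lam) / 2) * N ≤ (Dhat ω : ℝ)} ≥ ENNReal.ofReal (1 - δ) ∧
            (1 - δ) * (1 - lam) / 4 * N * ε ^ 2 ≤
              ∫ ω, ε ^ 2 * ∑ j ∈ Finset.range (Dhat ω), (η j ω) ^ 2 ∂P := by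
  obtain ⟨hδ0, -⟩ := hδ
  obtain ⟨hlam0, hlam1⟩ := hlam
  obtain ⟨γ, hγ, hγ1⟩ : ∃ γ : ℝ, lam < γ * (1 + lam) / 2 ∧ γ < ∫ x, x ^ 2 ∂gaussianReal 0 1 :=
    ⟨(1 + 3 * lam) / (2 * (1 + lam)), by field_simp; linarith, by
      rw [integral_sq_gaussianReal, div_lt_iff₀ (by positivity)]; norm_num; linarith⟩
  obtain ⟨K, hK⟩ := exists_lt_integral_min_natCast (memLp_id_gaussianReal 2).integrable_sq hγ1
  set t := ∫ x, min (x ^ 2) (K : ℝ) ∂gaussianReal 0 1 - γ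
  have ht : 0 < t := sub_pos.2 hK
  obtain ⟨N₀, hN₀⟩ := eventually_atTop.1 ((eventually_le_mul_card_Ico_ceil hlam0.le hlam1.le hγ
    (K ^ 2 / (4 * t ^ 2 * δ) + 1)).and (eventually_ge_atTop 1))
  refine ⟨N₀, fun N hN Ω _ P _ η hη hlaw hind ε hε Dhat hDhat => ⟨?_, ?_⟩⟩
  · obtain ⟨⟨hγs, hBs⟩, hN1⟩ := hN₀ N hN
    set s := Ico ⌈(1 - lam) / 2 * N⌉₊ N
    have hs : 0 < (#s : ℝ) := by linarith [show 0 ≤ K ^ 2 / (4 * t ^ 2 * δ) by positivity]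
    refine ofReal_one_sub_le_of_measure_compl_le hδ0.le ((measure_mono fun ω hω => ?_).trans
      ((measure_sum_sq_le_mul_card_le hη hlaw hind (Nat.cast_nonneg K) hK
        (card_pos.1 (by exact_mod_cast hs))).trans (ENNReal.ofReal_le_ofReal ?_)))
    · exact (sum_Ico_ceil_sq_le_of_critGauss_le hε.ne' hlam0.le (mem_Icc.1 (hDhat ω).1).2
        ((hDhat ω).2 N (mem_Icc.2 ⟨hN1, le_rfl⟩)) (not_le.1 hω)).trans hγs
    · have hB : K ^ 2 / (4 * t ^ 2 * δ) ≤ #s := by linarith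
      rw [div_le_iff₀ (by positivity)] at hB
      rw [div_le_iff₀ (by positivity)]
      change (K : ℝ) ^ 2 ≤ δ * (4 * t ^ 2 * #s)
      linarith
  · refine le_trans ?_ (one_sub_mul_le_integral_argmin_critGauss hη hlaw hind hlam0.le hε.ne'
      (hN₀ N hN).2 hDhat)
    have hX : 0 ≤ (1 - lam) * N * ε ^ 2 :=
      mul_nonneg (mul_nonneg (by linarith) N.cast_nonneg) (sq_nonneg ε)
    nlinarith [mul_le_mul_of_nonneg_right (show (1 - δ) / 4 ≤ 1 by linarith) hX]

end
end

section
/- Define V(h,h') = ⟨f̂_h − f_h, f_{h'} − f⟩. For any fixed h, h' > 0 and any x > 0, with probability larger than 1 − 2e^{−x}: |V(h,h')| ≤ √( (2x/n) ‖f‖_∞ ‖K‖_1² ‖f_{h'} − f‖² ) + x ‖f‖_∞ ‖K‖_1 (1+‖K‖_1) / (3n). -/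
open MeasureTheory ProbabilityTheory Real Finset

noncomputable section

/-- Scaled kernel `K_h(x) = (1/h) K(x/h)`. -/
def Kh (K : ℝ → ℝ) (h x : ℝ) : ℝ := (1 / h) * K (x / h)

/-- Squared L²(ℝ) norm. -/
def L2sq (g : ℝ → ℝ) : ℝ := ∫ x, (g x) ^ 2

/-- L²(ℝ) norm. -/
def L2n (g : ℝ → ℝ) : ℝ := Real.sqrt (L2sq g)

/-- L²(ℝ) inner product. -/
def ip2 (g k : ℝ → ℝ) : ℝ := ∫ x, g x * k x

/-- L¹(ℝ) norm. -/
def L1N (g : ℝ → ℝ) : ℝ := ∫ x, |g x|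

/-- L^∞(ℝ) (essential sup) norm. -/
def supN (g : ℝ → ℝ) : ℝ := (eLpNorm g ⊤ volume).toReal

/-- Kernel density estimator built from the sample `Y`. -/
def fhat (K : ℝ → ℝ) (h : ℝ) (n : ℕ) (Y : Fin n → ℝ) (x : ℝ) : ℝ :=
  (1 / (n : ℝ)) * ∑ i, Kh K h (x - Y i)

/-- `f_h = K_h ⋆ f`, the expectation of the kernel estimator. -/
def fbar (K f : ℝ → ℝ) (h x : ℝ) : ℝ := ∫ y, Kh K h (x - y) * f y

/-- The PCO penalty `pen_λ(h) = (λ‖K_h‖² − ‖K_{h_min} − K_h‖²)/n`. -/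
def pen (K : ℝ → ℝ) (hmin lam : ℝ) (n : ℕ) (h : ℝ) : ℝ :=
  (lam * L2sq (Kh K h) - L2sq (fun x => Kh K hmin x - Kh K h x)) / n

/-- The PCO criterion `‖f̂_h − f̂_{h_min}‖² + pen_λ(h)`. -/
def crit (K : ℝ → ℝ) (hmin lam : ℝ) (n : ℕ) (Y : Fin n → ℝ) (h : ℝ) : ℝ :=
  L2sq (fun x => fhat K h n Y x - fhat K hmin n Y x) + pen K hmin lam n h

/-- The centered variable `V(h,h') = ⟨f̂_h − f_h, f_{h'} − f⟩`. -/
def Vstat (K f : ℝ → ℝ) (n : ℕ) (Y : Fin n → ℝ) (h h' : ℝ) : ℝ :=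
  ip2 (fun x => fhat K h n Y x - fbar K f h x) (fun x => fbar K f h' x - f x)

/-!
Write `d = f_{h'} - f` and `g = K̃_h ⋆ d`. Fubini turns `V(h,h') = ⟨f̂_h - f_h, d⟩` into the
centred empirical mean `(1/n) ∑ᵢ (g(Xᵢ) - E g(X))` of i.i.d. variables. These are bounded by
`‖K‖₁ ‖d‖_∞ ≤ ‖f‖_∞ ‖K‖₁ (1 + ‖K‖₁)`, and their second moment is at most
`‖f‖_∞ ‖g‖² ≤ ‖f‖_∞ ‖K‖₁² ‖d‖²` by Young's inequality. Bernstein's inequality, proved by the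
Chernoff bound with the estimate `E e^{tZ} ≤ exp(t E Z + t² E Z² / (2(1 - tB/3)))` for `|Z| ≤ B`,
then bounds each tail by `e^{-x}`.
-/

lemma two_mul_three_pow_le_factorial (k : ℕ) : 2 * 3 ^ k ≤ (k + 2).factorial := by
  induction k with
  | zero => simp [Nat.factorial]
  | succ k ih =>
    rw [Nat.factorial_succ, pow_succ]
    nlinarith

lemma exp_le_one_add_add_sq_div {y c : ℝ} (hy : |y| ≤ c) (hc : c < 3) :
    exp y ≤ 1 + y + y ^ 2 / (2 * (1 - c / 3)) := by
  have hc0 : 0 ≤ c := (abs_nonneg y).trans hy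
  have hseries : HasSum (fun k => y ^ k / k.factorial) (exp y) := by
    rw [Real.exp_eq_exp_ℝ]; exact NormedSpace.expSeries_div_hasSum_exp y
  have htail : HasSum (fun k => y ^ (k + 2) / (k + 2).factorial) (exp y - (1 + y)) := by
    rw [← hasSum_nat_add_iff' 2] at hseries
    simpa [Finset.sum_range_succ] using hseries
  have hgeom : HasSum (fun k => y ^ 2 / 2 * (c / 3) ^ k) (y ^ 2 / (2 * (1 - c / 3))) := by
    have := (hasSum_geometric_of_lt_one (by positivity) (by linarith : c / 3 < 1)).mul_left
      (y ^ 2 / 2)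
    rwa [← div_eq_mul_inv, div_div] at this
  have hterm (k : ℕ) : y ^ (k + 2) / (k + 2).factorial ≤ y ^ 2 / 2 * (c / 3) ^ k := by
    have hfact : (2 * 3 ^ k : ℝ) ≤ (k + 2).factorial := by
      exact_mod_cast two_mul_three_pow_le_factorial k
    calc y ^ (k + 2) / (k + 2).factorial ≤ y ^ 2 * c ^ k / (k + 2).factorial := by
          gcongr
          calc y ^ (k + 2) ≤ |y| ^ (k + 2) := (le_abs_self _).trans (abs_pow y _).le
            _ = y ^ 2 * |y| ^ k := by rw [pow_add, sq_abs, mul_comm]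
            _ ≤ y ^ 2 * c ^ k := by gcongr
      _ ≤ y ^ 2 * c ^ k / (2 * 3 ^ k) := by gcongr
      _ = y ^ 2 / 2 * (c / 3) ^ k := by rw [div_pow]; ring
  linarith [hasSum_le hterm htail hgeom]

lemma exists_bernstein_chernoff_param {v c x : ℝ} (hv : 0 < v) (hc : 0 ≤ c) (hx : 0 ≤ x) :
    ∃ t, 0 ≤ t ∧ c * t < 1 ∧
      -t * (√(2 * v * x) + c * x) + v * t ^ 2 / (2 * (1 - c * t)) = -x := by
  set a := √(2 * x / v)
  have ha : 0 ≤ a := sqrt_nonneg _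
  have hva : v * a ^ 2 = 2 * x := by rw [sq_sqrt (by positivity)]; field_simp
  have hsqrt : √(2 * v * x) = a * v := by
    rw [show 2 * v * x = 2 * x / v * v ^ 2 by field_simp, sqrt_mul (by positivity),
      sqrt_sq hv.le]
  have hca : 0 < 1 + c * a := by positivity
  refine ⟨a / (1 + c * a), by positivity, by rw [mul_div_assoc', div_lt_one hca]; linarith, ?_⟩
  have hct : 1 - c * (a / (1 + c * a)) = 1 / (1 + c * a) := by field_simp; ring
  rw [hsqrt, hct]
  field_simp
  linear_combination (-1) * hva

section Bernstein

variable {Ω ι : Type*} [MeasurableSpace Ω] {P : Measure Ω} [IsProbabilityMeasure P] [Fintype ι]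

lemma mgf_sub_integral_le {Z : Ω → ℝ} (hZ : AEStronglyMeasurable Z P) {B σ2 t : ℝ}
    (hB : ∀ᵐ ω ∂P, |Z ω| ≤ B) (hσ2 : ∫ ω, Z ω ^ 2 ∂P ≤ σ2) (ht : 0 ≤ t) (htB : t * B < 3) :
    mgf (fun ω => Z ω - ∫ ω, Z ω ∂P) P t ≤ exp (t ^ 2 / (2 * (1 - t * B / 3)) * σ2) := by
  set m := ∫ ω, Z ω ∂P
  set c := t ^ 2 / (2 * (1 - t * B / 3))
  have hc : 0 ≤ c := div_nonneg (sq_nonneg t) (by linarith)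
  have hZi : Integrable Z P := .of_bound hZ B (by simpa only [Real.norm_eq_abs] using hB)
  have hZ2i : Integrable (fun ω => Z ω ^ 2) P :=
    .of_bound (hZ.pow 2) (B ^ 2) <| hB.mono fun ω hω => by
      rw [Real.norm_eq_abs, abs_pow]; exact pow_le_pow_left₀ (abs_nonneg _) hω 2
  have hexpi : Integrable (fun ω => exp (t * Z ω)) P :=
    .of_bound (continuous_exp.comp_aestronglyMeasurable (hZ.const_mul t)) (exp (t * B)) <|
      hB.mono fun ω hω => by
        rw [Real.norm_eq_abs, abs_exp]
        exact exp_le_exp.2 (mul_le_mul_of_nonneg_left ((le_abs_self _).trans hω) ht)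
  have hE : ∫ ω, exp (t * Z ω) ∂P ≤ 1 + t * m + c * σ2 :=
    calc ∫ ω, exp (t * Z ω) ∂P ≤ ∫ ω, 1 + t * Z ω + c * Z ω ^ 2 ∂P := by
          refine integral_mono_ae hexpi
            (((integrable_const 1).add (hZi.const_mul t)).add (hZ2i.const_mul c)) ?_
          filter_upwards [hB] with ω hω
          have hy : |t * Z ω| ≤ t * B := by
            rw [abs_mul, abs_of_nonneg ht]; exact mul_le_mul_of_nonneg_left hω ht
          exact (exp_le_one_add_add_sq_div hy htB).trans_eq (by ring)
      _ = 1 + t * m + c * ∫ ω, Z ω ^ 2 ∂P := by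
          rw [integral_add (f := fun ω => 1 + t * Z ω) ((integrable_const 1).add
            (hZi.const_mul t)) (hZ2i.const_mul c), integral_add (integrable_const 1)
            (hZi.const_mul t), integral_const_mul, integral_const_mul]
          simp [m]
      _ ≤ 1 + t * m + c * σ2 := by gcongr
  calc mgf (fun ω => Z ω - m) P t = (∫ ω, exp (t * Z ω) ∂P) * exp (-(t * m)) := by
        simp_rw [mgf, mul_sub, sub_eq_add_neg, exp_add, integral_mul_const]
    _ ≤ exp (t * m + c * σ2) * exp (-(t * m)) := by
        gcongr; linarith [add_one_le_exp (t * m + c * σ2)]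
    _ = exp (c * σ2) := by rw [← exp_add]; ring_nf

theorem measureReal_bernstein_sum_ge_le [Nonempty ι] {W : ι → Ω → ℝ}
    (hWm : ∀ i, Measurable (W i)) (hindep : iIndepFun W P) {B σ2 m x : ℝ} (hB0 : 0 ≤ B)
    (hσ2 : 0 < σ2) (hB : ∀ i, ∀ᵐ ω ∂P, |W i ω| ≤ B) (hm : ∀ i, ∫ ω, W i ω ∂P = m)
    (hsq : ∀ i, ∫ ω, W i ω ^ 2 ∂P ≤ σ2) (hx : 0 ≤ x) :
    P.real {ω | √(2 * (Fintype.card ι * σ2) * x) + B / 3 * x ≤ ∑ i, (W i ω - m)}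
      ≤ exp (-x) := by
  set N : ℝ := (Fintype.card ι : ℝ)
  set u := √(2 * (N * σ2) * x) + B / 3 * x
  obtain ⟨t, ht, hct, hexp⟩ := exists_bernstein_chernoff_param
    (v := N * σ2) (by positivity) (by positivity : 0 ≤ B / 3) hx
  set D := t ^ 2 / (2 * (1 - t * B / 3)) * σ2
  set Y : ι → Ω → ℝ := fun i ω => W i ω - m
  have hYm (i : ι) : Measurable (Y i) := (hWm i).sub_const m
  have hYindep : iIndepFun Y P := hindep.comp _ fun _ => measurable_id.sub_const m
  have hmgf (i : ι) : mgf (Y i) P t ≤ exp D := by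
    simpa only [Y, hm i] using mgf_sub_integral_le (hWm i).aestronglyMeasurable (hB i) (hsq i) ht
      (by linarith)
  have hint : Integrable (fun ω => exp (t * ∑ i, Y i ω)) P := by
    refine .of_bound (continuous_exp.comp_aestronglyMeasurable
      ((Finset.measurable_sum _ fun i _ => hYm i).const_mul t).aestronglyMeasurable)
      (exp (t * (N * (B - m)))) ?_
    filter_upwards [ae_all_iff.2 hB] with ω hω
    rw [Real.norm_eq_abs, abs_exp, exp_le_exp]
    refine mul_le_mul_of_nonneg_left ?_ ht
    calc ∑ i, Y i ω ≤ ∑ _i : ι, (B - m) :=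
          Finset.sum_le_sum fun i _ => sub_le_sub_right ((le_abs_self _).trans (hω i)) m
      _ = N * (B - m) := by rw [Finset.sum_const, Finset.card_univ, nsmul_eq_mul]
  have hchernoff := measure_ge_le_exp_mul_mgf (X := ∑ i, Y i) (μ := P) u ht
    (by simpa only [Finset.sum_apply])
  simp only [Finset.sum_apply] at hchernoff
  calc P.real {ω | u ≤ ∑ i, Y i ω} ≤ exp (-t * u) * mgf (∑ i, Y i) P t := hchernoff
    _ ≤ exp (-t * u) * exp (N * D) := by
        rw [hYindep.mgf_sum hYm]
        gcongr
        calc ∏ i, mgf (Y i) P t ≤ ∏ _i : ι, exp D :=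
              Finset.prod_le_prod (fun _ _ => mgf_nonneg) fun i _ => hmgf i
          _ = exp (N * D) := by simp [N, ← exp_nat_mul]
    _ = exp (-x) := by
        rw [← exp_add, ← hexp]
        congr 1
        simp only [D]
        ring

theorem one_sub_le_measure_abs_mean_sub_le [Nonempty ι] {W : ι → Ω → ℝ}
    (hWm : ∀ i, Measurable (W i)) (hindep : iIndepFun W P) {B σ2 m x : ℝ} (hB0 : 0 ≤ B)
    (hσ2 : 0 < σ2) (hB : ∀ i, ∀ᵐ ω ∂P, |W i ω| ≤ B) (hm : ∀ i, ∫ ω, W i ω ∂P = m)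
    (hsq : ∀ i, ∫ ω, W i ω ^ 2 ∂P ≤ σ2) (hx : 0 ≤ x) :
    1 - ENNReal.ofReal (2 * exp (-x)) ≤
      P {ω | |1 / (Fintype.card ι : ℝ) * ∑ i, (W i ω - m)|
        ≤ √(2 * x / Fintype.card ι * σ2) + x * B / (3 * Fintype.card ι)} := by
  set N : ℝ := (Fintype.card ι : ℝ)
  have hN : 0 < N := Nat.cast_pos.2 Fintype.card_pos
  set r := √(2 * x / N * σ2) + x * B / (3 * N)
  set u := √(2 * (N * σ2) * x) + B / 3 * x
  have hu : N * r = u := by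
    have hsqrt : N * √(2 * x / N * σ2) = √(2 * (N * σ2) * x) := by
      rw [show 2 * (N * σ2) * x = N ^ 2 * (2 * x / N * σ2) by field_simp, sqrt_mul (sq_nonneg N),
        sqrt_sq hN.le]
    rw [mul_add, hsqrt, show N * (x * B / (3 * N)) = B / 3 * x by field_simp]
  have hupper := measureReal_bernstein_sum_ge_le hWm hindep hB0 hσ2 hB hm hsq hx
  have hlower := measureReal_bernstein_sum_ge_le (W := fun i ω => -W i ω) (m := -m)
    (fun i => (hWm i).neg) (hindep.comp _ fun _ => measurable_neg) hB0 hσ2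
    (fun i => by simpa only [abs_neg] using hB i) (fun i => by rw [integral_neg, hm i])
    (fun i => by simpa only [neg_sq] using hsq i) hx
  have hcompl : {ω | |1 / N * ∑ i, (W i ω - m)| ≤ r}ᶜ ⊆
      {ω | u ≤ ∑ i, (W i ω - m)} ∪ {ω | u ≤ ∑ i, (-W i ω - -m)} := by
    intro ω hω
    simp only [Set.mem_compl_iff, Set.mem_ofPred_eq, not_le] at hω
    rw [abs_mul, abs_of_pos (by positivity), one_div, ← div_eq_inv_mul, lt_div_iff₀ hN, mul_comm,
      hu] at hω
    have hneg : ∑ i, (-W i ω - -m) = -∑ i, (W i ω - m) := by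
      rw [← Finset.sum_neg_distrib]; exact Finset.sum_congr rfl fun _ _ => by ring
    simp only [Set.mem_union, Set.mem_ofPred_eq, hneg]
    exact (lt_abs.1 hω).imp le_of_lt le_of_lt
  calc 1 - ENNReal.ofReal (2 * exp (-x))
      ≤ 1 - (P {ω | u ≤ ∑ i, (W i ω - m)} + P {ω | u ≤ ∑ i, (-W i ω - -m)}) := by
        gcongr
        rw [two_mul, ENNReal.ofReal_add (exp_pos _).le (exp_pos _).le]
        gcongr <;> rw [← ofReal_measureReal] <;> gcongr
    _ ≤ 1 - P {ω | |1 / N * ∑ i, (W i ω - m)| ≤ r}ᶜ :=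
        tsub_le_tsub_left ((measure_mono hcompl).trans (measure_union_le _ _)) 1
    _ ≤ _ := by
        rw [tsub_le_iff_right, ← measure_univ (μ := P), ← Set.union_compl_self]
        exact measure_union_le _ _

end Bernstein

lemma sq_integral_mul_le_integral_mul_integral_mul_sq {α : Type*} [MeasurableSpace α]
    {μ : Measure α} {w ψ : α → ℝ} (hw0 : 0 ≤ᵐ[μ] w) (hw : Integrable w μ)
    (hψ : AEStronglyMeasurable ψ μ) (hwψ2 : Integrable (fun a => w a * ψ a ^ 2) μ) :
    (∫ a, w a * ψ a ∂μ) ^ 2 ≤ (∫ a, w a ∂μ) * ∫ a, w a * ψ a ^ 2 ∂μ := by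
  have hwψ : Integrable (fun a => w a * ψ a) μ := by
    refine (hw.add hwψ2).mono' (hw.aestronglyMeasurable.mul hψ) ?_
    filter_upwards [hw0] with a ha
    rw [Real.norm_eq_abs, abs_mul, abs_of_nonneg ha, Pi.add_apply]
    nlinarith [mul_nonneg ha (sq_nonneg (|ψ a| - 1)), sq_abs (ψ a), mul_nonneg ha (sq_nonneg (ψ a))]
  -- `∫ w (ψ - l)² ≥ 0` is a quadratic in `l`, so its discriminant is nonpositive
  have hquad (l : ℝ) : 0 ≤ (∫ a, w a ∂μ) * (l * l) + (-2 * ∫ a, w a * ψ a ∂μ) * l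
      + ∫ a, w a * ψ a ^ 2 ∂μ := by
    have hpt : (fun a => w a * (ψ a - l) ^ 2)
        = fun a => l * l * w a + -2 * l * (w a * ψ a) + w a * ψ a ^ 2 := by
      funext a; ring
    have hexpand : ∫ a, w a * (ψ a - l) ^ 2 ∂μ = (∫ a, w a ∂μ) * (l * l)
        + (-2 * ∫ a, w a * ψ a ∂μ) * l + ∫ a, w a * ψ a ^ 2 ∂μ := by
      rw [hpt, integral_add (f := fun a => l * l * w a + -2 * l * (w a * ψ a))
        ((hw.const_mul _).add (hwψ.const_mul _)) hwψ2,
        integral_add (hw.const_mul _) (hwψ.const_mul _), integral_const_mul, integral_const_mul]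
      ring
    rw [← hexpand]
    exact integral_nonneg_of_ae (hw0.mono fun a ha => mul_nonneg ha (sq_nonneg _))
  have := discrim_le_zero hquad
  rw [discrim] at this
  nlinarith

lemma abs_integral_mul_le {α : Type*} [MeasurableSpace α] {μ : Measure α} {k φ : α → ℝ} {C : ℝ}
    (hk : Integrable k μ) (hφ : ∀ᵐ a ∂μ, |φ a| ≤ C) :
    |∫ a, k a * φ a ∂μ| ≤ (∫ a, |k a| ∂μ) * C := by
  rw [← Real.norm_eq_abs, ← integral_mul_const]
  refine norm_integral_le_of_norm_le (hk.abs.mul_const C) ?_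
  filter_upwards [hφ] with a ha
  rw [Real.norm_eq_abs, abs_mul]
  exact mul_le_mul_of_nonneg_left ha (abs_nonneg _)

lemma integral_mul_le_of_ae_abs_le {α : Type*} [MeasurableSpace α] {μ : Measure α} {u f : α → ℝ}
    {M : ℝ} (hu0 : ∀ a, 0 ≤ u a) (hu : Integrable u μ) (hf : AEStronglyMeasurable f μ)
    (hfM : ∀ᵐ a ∂μ, |f a| ≤ M) : ∫ a, u a * f a ∂μ ≤ M * ∫ a, u a ∂μ := by
  rw [← integral_const_mul]
  refine integral_mono_ae (hu.mul_bdd hf (by simpa only [Real.norm_eq_abs] using hfM))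
    (hu.const_mul M) ?_
  filter_upwards [hfM] with a ha
  nlinarith [hu0 a, le_abs_self (f a)]

/-- `k̃ ⋆ φ` with `k̃(u) = k(-u)`; the paper's `g_{h,h'}` is `corr (Kh K h) (f_{h'} - f)`. -/
def corr (k φ : ℝ → ℝ) (y : ℝ) : ℝ := ∫ t, k (t - y) * φ t

section Correlation

variable {k φ : ℝ → ℝ}

lemma measurable_corr (hk : Measurable k) (hφ : Measurable φ) : Measurable (corr k φ) :=
  (((hk.comp (measurable_snd.sub measurable_fst)).mul (hφ.comp measurable_snd)).stronglyMeasurable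
    |>.integral_prod_right').measurable

lemma abs_corr_le {C : ℝ} (hk : Integrable k) (hφ : ∀ᵐ t, |φ t| ≤ C) (y : ℝ) :
    |corr k φ y| ≤ (∫ s, |k s|) * C := by
  simpa only [corr, integral_sub_right_eq_self (fun s => |k s|) y] using
    abs_integral_mul_le (hk.comp_sub_right y) hφ

lemma integral_conv_mul_eq_integral_corr_mul {f : ℝ → ℝ} {C : ℝ} (hk : Integrable k)
    (hf : Integrable f) (hφ : AEStronglyMeasurable φ) (hφC : ∀ᵐ t, |φ t| ≤ C) :
    ∫ t, (∫ y, k (t - y) * f y) * φ t = ∫ y, corr k φ y * f y := by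
  have hint : Integrable (fun p : ℝ × ℝ => k (p.1 - p.2) * f p.2 * φ p.1)
      (volume.prod volume) := by
    refine ((hf.convolution_integrand (ContinuousLinearMap.mul ℝ ℝ) hk (μ := volume)).mul_bdd
      (hφ.comp_quasiMeasurePreserving Measure.quasiMeasurePreserving_fst)
      (Measure.quasiMeasurePreserving_fst.ae (p := fun t => ‖φ t‖ ≤ C) hφC)).congr
      (.of_forall fun p => ?_)
    simp only [ContinuousLinearMap.mul_apply', Function.comp_apply]
    ring
  calc ∫ t, (∫ y, k (t - y) * f y) * φ t = ∫ t, ∫ y, k (t - y) * f y * φ t := by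
        simp only [integral_mul_const]
    _ = ∫ y, ∫ t, k (t - y) * f y * φ t := integral_integral_swap hint
    _ = ∫ y, corr k φ y * f y := by
        simp only [corr, ← integral_mul_const]
        refine integral_congr_ae (.of_forall fun y => integral_congr_ae (.of_forall fun t => ?_))
        simp only
        ring

lemma integrable_abs_sub_mul_sq (hkm : Measurable k) (hk : Integrable k) (hφm : Measurable φ)
    (hφ2 : Integrable (fun t => φ t ^ 2)) :
    Integrable (fun p : ℝ × ℝ => |k (p.2 - p.1)| * φ p.2 ^ 2) (volume.prod volume) := by
  refine (integrable_prod_iff' (f := fun p : ℝ × ℝ => |k (p.2 - p.1)| * φ p.2 ^ 2)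
    ((hkm.comp (measurable_snd.sub measurable_fst)).abs.mul
      ((hφm.comp measurable_snd).pow_const 2)).aestronglyMeasurable).2
    ⟨.of_forall fun t => (hk.abs.comp_sub_left t).mul_const (φ t ^ 2), ?_⟩
  refine (hφ2.const_mul (∫ s, |k s|)).congr (.of_forall fun t => ?_)
  simp only [norm_mul, norm_abs_eq_norm, norm_pow, Real.norm_eq_abs, sq_abs]
  rw [integral_mul_const, integral_sub_left_eq_self (fun s => |k s|)]

/-- Weighted Cauchy–Schwarz with weight `|k(· - y)|`; it needs `|k(· - y)| φ²` integrable, which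
Fubini gives for almost every `y`. -/
lemma ae_corr_sq_le (hkm : Measurable k) (hk : Integrable k) (hφm : Measurable φ)
    (hφ2 : Integrable (fun t => φ t ^ 2)) :
    ∀ᵐ y, corr k φ y ^ 2 ≤ (∫ s, |k s|) * ∫ t, |k (t - y)| * φ t ^ 2 := by
  filter_upwards [(integrable_abs_sub_mul_sq hkm hk hφm hφ2).prod_right_ae] with y hy
  calc corr k φ y ^ 2 ≤ (∫ t, |k (t - y)| * |φ t|) ^ 2 := by
        rw [← sq_abs]
        gcongr
        exact abs_integral_le_integral_abs.trans_eq (by simp only [abs_mul])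
    _ ≤ (∫ t, |k (t - y)|) * ∫ t, |k (t - y)| * |φ t| ^ 2 :=
        sq_integral_mul_le_integral_mul_integral_mul_sq (.of_forall fun _ => abs_nonneg _)
          (hk.abs.comp_sub_right y) hφm.abs.aestronglyMeasurable (by simpa only [sq_abs] using hy)
    _ = (∫ s, |k s|) * ∫ t, |k (t - y)| * φ t ^ 2 := by
        simp only [sq_abs, integral_sub_right_eq_self (fun s => |k s|) y]

lemma integrable_corr_sq (hkm : Measurable k) (hk : Integrable k) (hφm : Measurable φ)
    (hφ2 : Integrable (fun t => φ t ^ 2)) : Integrable (fun y => corr k φ y ^ 2) :=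
  ((integrable_abs_sub_mul_sq hkm hk hφm hφ2).integral_prod_left.const_mul _).mono'
    ((measurable_corr hkm hφm).pow_const 2).aestronglyMeasurable
    ((ae_corr_sq_le hkm hk hφm hφ2).mono fun y hy => by
      rwa [Real.norm_eq_abs, abs_of_nonneg (sq_nonneg _)])

lemma integral_corr_sq_le (hkm : Measurable k) (hk : Integrable k) (hφm : Measurable φ)
    (hφ2 : Integrable (fun t => φ t ^ 2)) :
    ∫ y, corr k φ y ^ 2 ≤ (∫ s, |k s|) ^ 2 * ∫ t, φ t ^ 2 := by
  have hF := integrable_abs_sub_mul_sq hkm hk hφm hφ2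
  calc ∫ y, corr k φ y ^ 2 ≤ ∫ y, (∫ s, |k s|) * ∫ t, |k (t - y)| * φ t ^ 2 :=
        integral_mono_ae (integrable_corr_sq hkm hk hφm hφ2) (hF.integral_prod_left.const_mul _)
          (ae_corr_sq_le hkm hk hφm hφ2)
    _ = (∫ s, |k s|) * ∫ t, ∫ y, |k (t - y)| * φ t ^ 2 := by
        rw [integral_const_mul, integral_integral_swap (f := fun y t => |k (t - y)| * φ t ^ 2) hF]
    _ = (∫ s, |k s|) ^ 2 * ∫ t, φ t ^ 2 := by
        simp only [integral_mul_const, integral_sub_left_eq_self (fun s => |k s|),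
          integral_const_mul]
        ring

end Correlation

section Kernel

variable {K f : ℝ → ℝ}

lemma measurable_Kh (hKm : Measurable K) (b : ℝ) : Measurable (Kh K b) :=
  (hKm.comp (measurable_id.div_const b)).const_mul _

lemma integrable_Kh (hKi : Integrable K) (b : ℝ) : Integrable (Kh K b) := by
  rcases eq_or_ne b 0 with rfl | hb
  · exact (integrable_zero ℝ ℝ volume).congr (.of_forall fun x => by simp [Kh])
  · exact (hKi.comp_div hb).const_mul _

lemma integral_abs_Kh {b : ℝ} (hb : b ≠ 0) : ∫ s, |Kh K b s| = L1N K := by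
  simp only [Kh, abs_mul, integral_const_mul, Measure.integral_comp_div (fun s => |K s|),
    smul_eq_mul, L1N]
  rw [← mul_assoc, abs_div, abs_one, div_mul_cancel₀ _ (abs_ne_zero.2 hb), one_mul]

lemma one_le_L1N (hK1 : ∫ x, K x = 1) : 1 ≤ L1N K := by
  simpa only [L1N, hK1, abs_one] using abs_integral_le_integral_abs (f := K) (μ := volume)

lemma measurable_fbar (hKm : Measurable K) (hfm : Measurable f) (b : ℝ) :
    Measurable (fbar K f b) :=
  ((((measurable_Kh hKm b).comp (measurable_fst.sub measurable_snd)).mul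
    (hfm.comp measurable_snd)).stronglyMeasurable.integral_prod_right').measurable

lemma integrable_fbar (hKi : Integrable K) (hfi : Integrable f) (b : ℝ) :
    Integrable (fbar K f b) := by
  refine ((hfi.convolution_integrand (ContinuousLinearMap.mul ℝ ℝ) (integrable_Kh hKi b)
    (μ := volume)).integral_prod_left).congr (.of_forall fun t => ?_)
  simp only [fbar, ContinuousLinearMap.mul_apply', mul_comm]

lemma abs_fbar_le {M b : ℝ} (hKi : Integrable K) (hb : b ≠ 0) (hfM : ∀ᵐ y, |f y| ≤ M) (t : ℝ) :
    |fbar K f b t| ≤ L1N K * M := by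
  simpa only [fbar, integral_sub_left_eq_self (fun s => |Kh K b s|), integral_abs_Kh hb] using
    abs_integral_mul_le ((integrable_Kh hKi b).comp_sub_left t) hfM

lemma ip2_fhat_sub_fbar_eq {φ : ℝ → ℝ} {C h : ℝ} {n : ℕ} (hKi : Integrable K)
    (hfi : Integrable f) (hφ : AEStronglyMeasurable φ) (hφC : ∀ᵐ t, |φ t| ≤ C) (hn : n ≠ 0)
    (Y : Fin n → ℝ) :
    ip2 (fun x => fhat K h n Y x - fbar K f h x) φ =
      1 / n * ∑ i, (corr (Kh K h) φ (Y i) - ∫ y, corr (Kh K h) φ y * f y) := by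
  have hφC' : ∀ᵐ t, ‖φ t‖ ≤ C := by simpa only [Real.norm_eq_abs] using hφC
  have hKφ (y : ℝ) : Integrable (fun t => Kh K h (t - y) * φ t) :=
    ((integrable_Kh hKi h).comp_sub_right y).mul_bdd hφ hφC'
  have hfbarφ : Integrable (fun t => fbar K f h t * φ t) :=
    (integrable_fbar hKi hfi h).mul_bdd hφ hφC'
  have hpt (t : ℝ) : (fhat K h n Y t - fbar K f h t) * φ t
      = 1 / n * ∑ i, (Kh K h (t - Y i) * φ t - fbar K f h t * φ t) := by
    rw [Finset.sum_sub_distrib, ← Finset.sum_mul, Finset.sum_const, Finset.card_univ,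
      Fintype.card_fin, nsmul_eq_mul, fhat]
    field_simp
  rw [ip2, integral_congr_ae (.of_forall hpt), integral_const_mul,
    integral_finsetSum (f := fun i t => Kh K h (t - Y i) * φ t - fbar K f h t * φ t) _
      fun i _ => (hKφ (Y i)).sub hfbarφ]
  congr 1
  refine Finset.sum_congr rfl fun i _ => ?_
  rw [integral_sub (hKφ (Y i)) hfbarφ,
    ← integral_conv_mul_eq_integral_corr_mul (integrable_Kh hKi h) hfi hφ hφC]
  rfl

end Kernel

lemma ae_abs_le_supN {g : ℝ → ℝ} (hg : eLpNorm g ⊤ volume < ⊤) : ∀ᵐ x, |g x| ≤ supN g := by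
  filter_upwards [ae_le_eLpNormEssSup (f := g) (μ := volume)] with x hx
  rw [← Real.norm_eq_abs, ← toReal_enorm, supN, eLpNorm_exponent_top]
  exact ENNReal.toReal_mono (eLpNorm_exponent_top (f := g) ▸ hg.ne) hx

lemma supN_pos {g : ℝ → ℝ} (hg : eLpNorm g ⊤ volume < ⊤) (h : ∫ x, g x ≠ 0) : 0 < supN g := by
  refine ENNReal.toReal_pos (fun h0 => h ?_) hg.ne
  rw [eLpNorm_exponent_top, eLpNormEssSup_eq_zero_iff] at h0
  simp [integral_congr_ae h0]

lemma ip2_eq_zero_of_L2sq_eq_zero {u d : ℝ → ℝ} (hd : Integrable (fun x => d x ^ 2))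
    (h : L2sq d = 0) : ip2 u d = 0 := by
  have hd0 : (fun x => d x ^ 2) =ᵐ[volume] 0 :=
    (integral_eq_zero_iff_of_nonneg (fun x => sq_nonneg (d x)) hd).1 h
  rw [ip2, integral_eq_zero_of_ae]
  filter_upwards [hd0] with x hx
  simp [pow_eq_zero_iff two_ne_zero |>.1 hx]

section Density

variable {Ω : Type*} [MeasurableSpace Ω] {P : Measure Ω} {X : Ω → ℝ} {f : ℝ → ℝ}

lemma integral_comp_eq_integral_mul_of_map_eq_withDensity (hX : AEMeasurable X P)
    (hfm : Measurable f) (hf0 : ∀ x, 0 ≤ f x)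
    (hXd : P.map X = volume.withDensity fun x => ENNReal.ofReal (f x)) {u : ℝ → ℝ}
    (hu : Measurable u) : ∫ ω, u (X ω) ∂P = ∫ y, u y * f y := by
  rw [← integral_map hX hu.aestronglyMeasurable, hXd, integral_withDensity_eq_integral_toReal_smul
    hfm.ennreal_ofReal (.of_forall fun _ => ENNReal.ofReal_lt_top)]
  simp only [ENNReal.toReal_ofReal (hf0 _), smul_eq_mul, mul_comm]

lemma integral_eq_one_of_map_eq_withDensity [IsProbabilityMeasure P] (hX : AEMeasurable X P)
    (hfm : Measurable f) (hf0 : ∀ x, 0 ≤ f x)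
    (hXd : P.map X = volume.withDensity fun x => ENNReal.ofReal (f x)) : ∫ y, f y = 1 := by
  simpa using (integral_comp_eq_integral_mul_of_map_eq_withDensity hX hfm hf0 hXd
    (measurable_const (a := (1 : ℝ)))).symm

lemma integrable_of_map_eq_withDensity [IsProbabilityMeasure P] (hX : AEMeasurable X P)
    (hfm : Measurable f) (hf0 : ∀ x, 0 ≤ f x)
    (hXd : P.map X = volume.withDensity fun x => ENNReal.ofReal (f x)) : Integrable f :=
  .of_integral_ne_zero (by rw [integral_eq_one_of_map_eq_withDensity hX hfm hf0 hXd]; simp)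

end Density

theorem one_sub_le_measure_abs_ip2_fhat_sub_fbar_le {Ω : Type*} [MeasurableSpace Ω]
    {P : Measure Ω} [IsProbabilityMeasure P] {n : ℕ} (hn : 0 < n) {X : Fin n → Ω → ℝ}
    (hXm : ∀ i, Measurable (X i)) (hindep : iIndepFun X P) {f : ℝ → ℝ} (hfm : Measurable f)
    (hf0 : ∀ x, 0 ≤ f x)
    (hXd : ∀ i, Measure.map (X i) P = volume.withDensity fun x => ENNReal.ofReal (f x))
    {M : ℝ} (hM : 0 < M) (hfM : ∀ᵐ y, |f y| ≤ M) {K : ℝ → ℝ} (hKm : Measurable K)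
    (hKi : Integrable K) (hK : 0 < L1N K) {h : ℝ} (hh : h ≠ 0) {φ : ℝ → ℝ} {C : ℝ}
    (hφm : Measurable φ) (hφC : ∀ᵐ t, |φ t| ≤ C) (hφ2 : Integrable (fun t => φ t ^ 2))
    {x : ℝ} (hx : 0 ≤ x) :
    1 - ENNReal.ofReal (2 * exp (-x)) ≤
      P {ω | |ip2 (fun t => fhat K h n (fun i => X i ω) t - fbar K f h t) φ|
        ≤ √(2 * x / n * (M * (L1N K ^ 2 * L2sq φ))) + x * (L1N K * C) / (3 * n)} := by
  have hC : 0 ≤ C := by obtain ⟨t, ht⟩ := hφC.exists; exact (abs_nonneg _).trans ht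
  rcases (integral_nonneg fun t => sq_nonneg (φ t) : 0 ≤ L2sq φ).eq_or_lt with hφ0 | hφ0
  · refine tsub_le_self.trans (le_of_eq ?_)
    convert (measure_univ (μ := P)).symm using 2
    ext ω
    simp only [ip2_eq_zero_of_L2sq_eq_zero hφ2 hφ0.symm, abs_zero, Set.mem_ofPred_eq,
      Set.mem_univ, iff_true]
    positivity
  have : Nonempty (Fin n) := ⟨⟨0, hn⟩⟩
  set g := corr (Kh K h) φ
  have hgm : Measurable g := measurable_corr (measurable_Kh hKm h) hφm
  have hmoment (i : Fin n) (u : ℝ → ℝ) (hu : Measurable u) :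
      ∫ ω, u (g (X i ω)) ∂P = ∫ y, u (g y) * f y :=
    integral_comp_eq_integral_mul_of_map_eq_withDensity (hXm i).aemeasurable hfm hf0 (hXd i)
      (hu.comp hgm)
  have hg2 : ∫ y, g y ^ 2 ≤ L1N K ^ 2 * L2sq φ :=
    (integral_corr_sq_le (measurable_Kh hKm h) (integrable_Kh hKi h) hφm hφ2).trans_eq
      (by rw [integral_abs_Kh hh]; rfl)
  have key := one_sub_le_measure_abs_mean_sub_le (W := fun i ω => g (X i ω)) (m := ∫ y, g y * f y)
    (B := L1N K * C) (σ2 := M * (L1N K ^ 2 * L2sq φ)) (fun i => hgm.comp (hXm i))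
    (hindep.comp _ fun _ => hgm) (by positivity) (by positivity)
    (fun i => .of_forall fun ω => by
      simpa only [integral_abs_Kh hh] using abs_corr_le (integrable_Kh hKi h) hφC (X i ω))
    (fun i => hmoment i id measurable_id)
    (fun i => by
      rw [hmoment i (· ^ 2) (measurable_id.pow_const 2)]
      exact (integral_mul_le_of_ae_abs_le (fun y => sq_nonneg (g y))
        (integrable_corr_sq (measurable_Kh hKm h) (integrable_Kh hKi h) hφm hφ2)
        hfm.aestronglyMeasurable hfM).trans (mul_le_mul_of_nonneg_left hg2 hM.le)) hx
  rw [Fintype.card_fin] at key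
  refine key.trans_eq (congrArg P (Set.ext fun ω => ?_))
  rw [Set.mem_ofPred_eq, Set.mem_ofPred_eq, ip2_fhat_sub_fbar_eq hKi
    (integrable_of_map_eq_withDensity (hXm ⟨0, hn⟩).aemeasurable hfm hf0 (hXd ⟨0, hn⟩))
    hφm.aestronglyMeasurable hφC hn.ne']

theorem V_term_Bernstein_bound_general
    {Ω : Type} [MeasurableSpace Ω] (P : Measure Ω) [IsProbabilityMeasure P]
    (n : ℕ) (hn : 0 < n)
    (X : Fin n → Ω → ℝ) (hXm : ∀ i, Measurable (X i))
    (f : ℝ → ℝ) (hfm : Measurable f) (hf0 : ∀ x, 0 ≤ f x)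
    (hfb : eLpNorm f ⊤ volume < ⊤)
    (hXd : ∀ i, Measure.map (X i) P = volume.withDensity fun x => ENNReal.ofReal (f x))
    (hindep : iIndepFun X P)
    (K : ℝ → ℝ) (hKm : Measurable K) (hKi : Integrable K)
    (hK1 : (∫ x, K x) = 1)
    (h h' : ℝ) (hh : 0 < h) (hh' : 0 < h')
    (x : ℝ) (hx : 0 < x) :
    P {ω | |Vstat K f n (fun i => X i ω) h h'| ≤
        Real.sqrt ((2 * x / n) * supN f * (L1N K) ^ 2
            * L2sq (fun t => fbar K f h' t - f t))
          + x * supN f * L1N K * (1 + L1N K) / (3 * n)}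
      ≥ 1 - ENNReal.ofReal (2 * Real.exp (-x)) := by
  have hX0 := (hXm ⟨0, hn⟩).aemeasurable (μ := P)
  have hfi := integrable_of_map_eq_withDensity hX0 hfm hf0 (hXd ⟨0, hn⟩)
  have hM : 0 < supN f := supN_pos hfb <| by
    rw [integral_eq_one_of_map_eq_withDensity hX0 hfm hf0 (hXd ⟨0, hn⟩)]; exact one_ne_zero
  have hfM := ae_abs_le_supN hfb
  set d := fun t => fbar K f h' t - f t
  have hdm : Measurable d := (measurable_fbar hKm hfm h').sub hfm
  have hdC : ∀ᵐ t, |d t| ≤ L1N K * supN f + supN f := hfM.mono fun t ht =>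
    (abs_sub _ _).trans (add_le_add (abs_fbar_le hKi hh'.ne' hfM t) ht)
  have hd2 : Integrable (fun t => d t ^ 2) :=
    (((integrable_fbar hKi hfi h').sub hfi).mul_bdd hdm.aestronglyMeasurable
      (by simpa only [Real.norm_eq_abs] using hdC)).congr (.of_forall fun t => (sq (d t)).symm)
  refine (one_sub_le_measure_abs_ip2_fhat_sub_fbar_le hn hXm hindep hfm hf0 hXd hM hfM hKm hKi
    (one_pos.trans_le (one_le_L1N hK1)) hh.ne' hdm hdC hd2 hx.le).trans_eq
    (congrArg P (Set.ext fun ω => ?_))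
  simp only [Set.mem_ofPred_eq]
  ring_nf
  rfl

theorem V_term_Bernstein_bound
    {Ω : Type} [MeasurableSpace Ω] (P : Measure Ω) [IsProbabilityMeasure P]
    (n : ℕ) (hn : 0 < n)
    (X : Fin n → Ω → ℝ) (hXm : ∀ i, Measurable (X i))
    (f : ℝ → ℝ) (hfm : Measurable f) (hf0 : ∀ x, 0 ≤ f x)
    (hfb : eLpNorm f ⊤ volume < ⊤)
    (hXd : ∀ i, Measure.map (X i) P = volume.withDensity fun x => ENNReal.ofReal (f x))
    (hindep : iIndepFun X P)
    (K : ℝ → ℝ) (hKm : Measurable K) (hKi : Integrable K)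
    (hKb : eLpNorm K ⊤ volume < ⊤)
    (hKsym : ∀ x, K (-x) = K x) (hK1 : (∫ x, K x) = 1)
    (h h' : ℝ) (hh : 0 < h) (hh' : 0 < h')
    (x : ℝ) (hx : 0 < x) :
    P {ω | |Vstat K f n (fun i => X i ω) h h'| ≤
        Real.sqrt ((2 * x / n) * supN f * (L1N K) ^ 2
            * L2sq (fun t => fbar K f h' t - f t))
          + x * supN f * L1N K * (1 + L1N K) / (3 * n)}
      ≥ 1 - ENNReal.ofReal (2 * Real.exp (-x)) :=
  V_term_Bernstein_bound_general P n hn X hXm f hfm hf0 hfb hXd hindep K hKm hKi hK1 h h' hh hh' x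
    hx

end
end
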